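/- arXiv:1804.04432 — 5 statements merged into one kernel-verified Lean document; each statement's English description precedes it below -/
import Mathlib

section
/- Let A, B be real symmetric n×n matrices with B positive definite, let λ_max be the largest generalized eigenvalue of (A,B), and let α ≥ 0 and μ ∈ ℝ. If μ − α‖B^{-1}‖₂ ≥ λ_max, then A − μB + αI ⪯ A − (μ − α‖B^{-1}‖₂)B ⪯ 0. -/
open Matrix

/-- Euclidean norm on `Fin n → ℝ`. -/
noncomputable def euclNorm {n : ℕ} (x : Fin n → ℝ) : ℝ := Real.sqrt (∑ i, x i ^ 2)

/-- Spectral (ℓ²-operator) norm of a real `n×n` matrix. -/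
noncomputable def matSpectralNorm {n : ℕ} (A : Matrix (Fin n) (Fin n) ℝ) : ℝ :=
  sSup {r : ℝ | ∃ x : Fin n → ℝ, euclNorm x = 1 ∧ r = euclNorm (A.mulVec x)}

/-!
If every generalized eigenvalue of `(A, B)` is at most `c`, then `c • B - A ⪰ 0`: with
`C = B^{1/2}`, the eigenpairs `(t, w)` of `C⁻¹ A C⁻¹` correspond to the generalized eigenpairs
`(t, C⁻¹ w)` of `(A, B)`, so `c • 1 - C⁻¹ A C⁻¹ ⪰ 0`, and conjugating by `C` gives the claim.
Applied to `(1, B)`, whose generalized eigenvalues are the eigenvalues of `B⁻¹` and hence at most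
`‖B⁻¹‖₂`, this yields `‖B⁻¹‖₂ • B - 1 ⪰ 0`; the first inequality is `α` times this one.
Applied to `(A, B)` with `c = μ - α‖B⁻¹‖₂ ≥ λ_max`, it yields the second.
-/

lemma euclNorm_eq_norm {n : ℕ} (x : Fin n → ℝ) :
    euclNorm x = ‖(WithLp.toLp 2 x : EuclideanSpace ℝ (Fin n))‖ := by
  simp [euclNorm, EuclideanSpace.norm_eq]

lemma euclNorm_smul {n : ℕ} (c : ℝ) (x : Fin n → ℝ) : euclNorm (c • x) = |c| * euclNorm x := by
  simp [euclNorm_eq_norm, norm_smul]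

lemma euclNorm_pos {n : ℕ} {x : Fin n → ℝ} (hx : x ≠ 0) : 0 < euclNorm x := by
  simpa [euclNorm_eq_norm] using hx

namespace Matrix

lemma euclNorm_mulVec_le {n : ℕ} (M : Matrix (Fin n) (Fin n) ℝ) (x : Fin n → ℝ) :
    euclNorm (M *ᵥ x) ≤ matSpectralNorm M * euclNorm x := by
  have hbdd : BddAbove {r : ℝ | ∃ x : Fin n → ℝ, euclNorm x = 1 ∧ r = euclNorm (M *ᵥ x)} := by
    refine ⟨‖toEuclideanCLM (𝕜 := ℝ) M‖, ?_⟩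
    rintro _ ⟨y, hy, rfl⟩
    rw [euclNorm_eq_norm] at hy
    simpa [euclNorm_eq_norm, hy] using (toEuclideanCLM (𝕜 := ℝ) M).le_opNorm (WithLp.toLp 2 y)
  rcases eq_or_ne x 0 with rfl | hx
  · simp [euclNorm]
  have hpos := euclNorm_pos hx
  have hunit : euclNorm ((euclNorm x)⁻¹ • x) = 1 := by
    rw [euclNorm_smul, abs_of_pos (inv_pos.2 hpos), inv_mul_cancel₀ hpos.ne']
  have hle := le_csSup hbdd ⟨_, hunit, rfl⟩
  rw [mulVec_smul, euclNorm_smul, abs_of_pos (inv_pos.2 hpos), inv_mul_le_iff₀ hpos] at hle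
  exact hle.trans_eq (mul_comm _ _)

lemma abs_le_matSpectralNorm_inv {n : ℕ} {B : Matrix (Fin n) (Fin n) ℝ} (hB : IsUnit B)
    {lam : ℝ} {v : Fin n → ℝ} (hv : v ≠ 0) (h : v = lam • B *ᵥ v) :
    |lam| ≤ matSpectralNorm B⁻¹ := by
  have hinv : B⁻¹ *ᵥ v = lam • v := by
    conv_lhs => rw [h]
    rw [mulVec_smul, mulVec_mulVec, nonsing_inv_mul B ((isUnit_iff_isUnit_det B).1 hB), one_mulVec]
  have hle := euclNorm_mulVec_le B⁻¹ v
  rw [hinv, euclNorm_smul] at hle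
  exact le_of_mul_le_mul_right hle (euclNorm_pos hv)

lemma IsHermitian.posSemidef_of_eigenvalue_nonneg {ι : Type*} [Fintype ι] [DecidableEq ι]
    {M : Matrix ι ι ℝ} (hM : M.IsHermitian)
    (h : ∀ (t : ℝ) (w : ι → ℝ), w ≠ 0 → M *ᵥ w = t • w → 0 ≤ t) : M.PosSemidef :=
  hM.posSemidef_iff_eigenvalues_nonneg.2 fun i =>
    h _ _ (fun h0 => hM.eigenvectorBasis.orthonormal.ne_zero i (by ext j; exact congrFun h0 j))
      (hM.mulVec_eigenvectorBasis i)

open scoped MatrixOrder in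
lemma smul_sub_posSemidef_of_generalized_eigenvalue_le {ι : Type*} [Fintype ι] [DecidableEq ι]
    {A B : Matrix ι ι ℝ} (hA : A.IsHermitian) (hB : B.PosDef) {c : ℝ}
    (h : ∀ (lam : ℝ) (v : ι → ℝ), v ≠ 0 → A *ᵥ v = lam • B *ᵥ v → lam ≤ c) :
    (c • B - A).PosSemidef := by
  set C := CFC.sqrt B
  have hCH : C.IsHermitian := (CFC.sqrt_nonneg B).posSemidef.1
  have hCC : C * C = B := CFC.sqrt_mul_sqrt_self B hB.posSemidef.nonneg
  have hCu : IsUnit C := (CFC.isUnit_sqrt_iff B hB.posSemidef.nonneg).2 hB.isUnit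
  have hCCi : C * C⁻¹ = 1 := mul_nonsing_inv C ((isUnit_iff_isUnit_det C).1 hCu)
  have hCiC : C⁻¹ * C = 1 := nonsing_inv_mul C ((isUnit_iff_isUnit_det C).1 hCu)
  set M := C⁻¹ * A * C⁻¹
  have hconj : C * (c • 1 - M) * star C = c • B - A := by
    rw [star_eq_conjTranspose, hCH.eq, mul_sub, sub_mul, Matrix.mul_smul, mul_one,
      Matrix.smul_mul, hCC, mul_assoc, mul_assoc, mul_assoc, hCiC, mul_one, ← mul_assoc, hCCi,
      one_mul]
  rw [← hconj, hCu.posSemidef_star_right_conjugate_iff]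
  have hMH : M.IsHermitian := by
    have := isHermitian_mul_mul_conjTranspose C⁻¹ hA
    rwa [hCH.inv.eq] at this
  refine IsHermitian.posSemidef_of_eigenvalue_nonneg
    ((isHermitian_one.smul (IsSelfAdjoint.all c)).sub hMH) fun t w hw hMw => ?_
  have hv : C⁻¹ *ᵥ w ≠ 0 := fun h0 => hw <| by
    rw [← one_mulVec w, ← hCCi, ← mulVec_mulVec, h0, mulVec_zero]
  suffices A *ᵥ (C⁻¹ *ᵥ w) = (c - t) • B *ᵥ (C⁻¹ *ᵥ w) by linarith [h _ _ hv this]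
  have hMw' : M *ᵥ w = (c - t) • w := by
    rw [sub_smul, ← hMw, sub_mulVec, smul_mulVec, one_mulVec, sub_sub_cancel]
  calc A *ᵥ (C⁻¹ *ᵥ w) = C *ᵥ (M *ᵥ w) := by
        simp only [M, mulVec_mulVec, ← mul_assoc, hCCi, one_mul]
    _ = (c - t) • B *ᵥ (C⁻¹ *ᵥ w) := by
        rw [hMw', mulVec_smul, ← hCC, mulVec_mulVec, mul_assoc, hCCi, mul_one]

lemma PosDef.matSpectralNorm_inv_smul_sub_one_posSemidef {n : ℕ} {B : Matrix (Fin n) (Fin n) ℝ}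
    (hB : B.PosDef) : (matSpectralNorm B⁻¹ • B - 1).PosSemidef :=
  smul_sub_posSemidef_of_generalized_eigenvalue_le isHermitian_one hB fun _ _ hv h =>
    (le_abs_self _).trans (abs_le_matSpectralNorm_inv hB.isUnit hv (by rwa [one_mulVec] at h))

end Matrix

theorem shifted_matrix_negSemidef_general {n : ℕ}
    (A B : Matrix (Fin n) (Fin n) ℝ) (hA : A.IsSymm) (hB : B.PosDef)
    (lmax : ℝ)
    (hmax : ∀ (lam : ℝ) (v : Fin n → ℝ), v ≠ 0 →
      A.mulVec v = lam • B.mulVec v → lam ≤ lmax)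
    (α μ : ℝ) (hα : 0 ≤ α)
    (h : lmax ≤ μ - α * matSpectralNorm B⁻¹) :
    ((A - (μ - α * matSpectralNorm B⁻¹) • B) - (A - μ • B + α • (1 : Matrix (Fin n) (Fin n) ℝ))).PosSemidef
      ∧ (-(A - (μ - α * matSpectralNorm B⁻¹) • B)).PosSemidef := by
  have hdiff : (A - (μ - α * matSpectralNorm B⁻¹) • B) - (A - μ • B + α • 1)
      = α • (matSpectralNorm B⁻¹ • B - 1) := by
    module
  rw [hdiff, neg_sub]
  exact ⟨hB.matSpectralNorm_inv_smul_sub_one_posSemidef.smul hα,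
    smul_sub_posSemidef_of_generalized_eigenvalue_le (isHermitian_iff_isSymm.2 hA) hB
      fun lam v hv hAv => (hmax lam v hv hAv).trans h⟩

/-- if `μ - α‖B⁻¹‖₂ ≥ λ_max`, then
`A - μB + αI ⪯ A - (μ - α‖B⁻¹‖₂)B ⪯ 0`. -/
theorem shifted_matrix_negSemidef {n : ℕ}
    (A B : Matrix (Fin n) (Fin n) ℝ) (hA : A.IsSymm) (hB : B.PosDef)
    (lmax : ℝ)
    (hev : ∃ v : Fin n → ℝ, v ≠ 0 ∧ A.mulVec v = lmax • B.mulVec v)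
    (hmax : ∀ (lam : ℝ) (v : Fin n → ℝ), v ≠ 0 →
      A.mulVec v = lam • B.mulVec v → lam ≤ lmax)
    (α μ : ℝ) (hα : 0 ≤ α)
    (h : lmax ≤ μ - α * matSpectralNorm B⁻¹) :
    ((A - (μ - α * matSpectralNorm B⁻¹) • B) - (A - μ • B + α • (1 : Matrix (Fin n) (Fin n) ℝ))).PosSemidef
      ∧ (-(A - (μ - α * matSpectralNorm B⁻¹) • B)).PosSemidef :=
  shifted_matrix_negSemidef_general A B hA hB lmax hmax α μ hα h
end

section
/- Let T = co(x_0,...,x_n) ⊂ ℝ^n be a simplex of diameter h, and let f : ℝ^n → ℝ be C², with ‖H(x)‖₂ ≤ β for all x ∈ T, where H is the Hessian of f. Then for every x = Σ_k λ_k x_k ∈ T (barycentric coordinates λ_k), |f(x) − Σ_k λ_k f(x_k)| ≤ β h². -/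
open Matrix

/-- Partial derivative of `φ` in the `i`-th coordinate direction. -/
noncomputable def pderiv' {n : ℕ} (φ : (Fin n → ℝ) → ℝ) (i : Fin n) (y : Fin n → ℝ) : ℝ :=
  fderiv ℝ φ y (Pi.single i 1)

/-- Hessian matrix of `φ` at `y`. -/
noncomputable def hessian {n : ℕ} (φ : (Fin n → ℝ) → ℝ) (y : Fin n → ℝ) :
    Matrix (Fin n) (Fin n) ℝ :=
  Matrix.of fun i j => pderiv' (fun z => pderiv' φ j z) i y

/-
On each segment from `x` to a vertex `v k`, Taylor's theorem bounds the deviation of `f` from its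
tangent plane at `x` by the second directional derivative, i.e. by
`|wᵀ H w| ≤ ‖H‖₂ ‖w‖² ≤ β h²` with `w = v k - x`. Averaging these deviations with the weights
`λ k`, the tangent-plane terms cancel because `∑ k, λ k (v k - x) = 0`.
-/

open Set WithLp

theorem euclNorm_eq_norm_toLp {n : ℕ} (x : Fin n → ℝ) : euclNorm x = ‖toLp 2 x‖ := by
  simp [euclNorm, EuclideanSpace.norm_eq]

theorem matSpectralNorm_eq_norm_toEuclideanCLM {n : ℕ} (A : Matrix (Fin n) (Fin n) ℝ) :
    matSpectralNorm A = ‖toEuclideanCLM (𝕜 := ℝ) A‖ := by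
  rw [← ContinuousLinearMap.sSup_sphere_eq_norm, matSpectralNorm]
  congr 1
  ext r
  constructor
  · rintro ⟨x, hx, rfl⟩
    refine ⟨toLp 2 x, by simpa [euclNorm_eq_norm_toLp] using hx, ?_⟩
    simp [euclNorm_eq_norm_toLp, toEuclideanCLM_toLp]
  · rintro ⟨x, hx, rfl⟩
    refine ⟨ofLp x, by simpa [euclNorm_eq_norm_toLp] using hx, ?_⟩
    rw [euclNorm_eq_norm_toLp]
    rfl

theorem matSpectralNorm_nonneg {n : ℕ} (A : Matrix (Fin n) (Fin n) ℝ) : 0 ≤ matSpectralNorm A :=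
  matSpectralNorm_eq_norm_toEuclideanCLM A ▸ norm_nonneg _

open scoped RealInnerProductSpace in
theorem abs_dotProduct_mulVec_le {n : ℕ} (A : Matrix (Fin n) (Fin n) ℝ) (w : Fin n → ℝ) :
    |w ⬝ᵥ A *ᵥ w| ≤ matSpectralNorm A * euclNorm w ^ 2 := by
  calc |w ⬝ᵥ A *ᵥ w| = |⟪toLp 2 w, toEuclideanCLM (𝕜 := ℝ) A (toLp 2 w)⟫| := by
        rw [inner_toEuclideanCLM]
    _ ≤ ‖toLp 2 w‖ * (‖toEuclideanCLM (𝕜 := ℝ) A‖ * ‖toLp 2 w‖) :=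
        (abs_real_inner_le_norm _ _).trans (by gcongr; exact ContinuousLinearMap.le_opNorm _ _)
    _ = matSpectralNorm A * euclNorm w ^ 2 := by
        rw [matSpectralNorm_eq_norm_toEuclideanCLM, euclNorm_eq_norm_toLp]; ring

theorem hessian_apply {n : ℕ} {f : (Fin n → ℝ) → ℝ} {y : Fin n → ℝ}
    (hf : DifferentiableAt ℝ (fderiv ℝ f) y) (i j : Fin n) :
    hessian f y i j = fderiv ℝ (fderiv ℝ f) y (Pi.single i 1) (Pi.single j 1) := by
  simp [hessian, pderiv', fderiv_clm_apply hf (differentiableAt_const _)]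

theorem fderiv_fderiv_apply_eq_dotProduct_hessian {n : ℕ} {f : (Fin n → ℝ) → ℝ}
    {y : Fin n → ℝ} (hf : DifferentiableAt ℝ (fderiv ℝ f) y) (w : Fin n → ℝ) :
    fderiv ℝ (fderiv ℝ f) y w w = w ⬝ᵥ hessian f y *ᵥ w := by
  have hw : w = ∑ i, w i • Pi.single i 1 := by
    simp [← Pi.single_smul, Finset.univ_sum_single]
  conv_lhs => rw [hw]
  simp only [map_sum, map_smul, _root_.sum_apply, _root_.smul_apply, smul_eq_mul, dotProduct,
    mulVec, hessian_apply hf, Finset.mul_sum]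
  rw [Finset.sum_comm]
  refine Finset.sum_congr rfl fun i _ => Finset.sum_congr rfl fun j _ => ?_
  ring

theorem abs_sub_sub_deriv_le {g g' g'' : ℝ → ℝ} {M : ℝ}
    (hg : ∀ t ∈ Icc (0 : ℝ) 1, HasDerivWithinAt g (g' t) (Icc 0 1) t)
    (hg' : ∀ t ∈ Icc (0 : ℝ) 1, HasDerivWithinAt g' (g'' t) (Icc 0 1) t)
    (hM : ∀ t ∈ Icc (0 : ℝ) 1, |g'' t| ≤ M) :
    |g 1 - g 0 - g' 0| ≤ M := by
  have h0 : (0 : ℝ) ∈ Icc (0 : ℝ) 1 := left_mem_Icc.2 zero_le_one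
  have hM0 : 0 ≤ M := (abs_nonneg _).trans (hM 0 h0)
  have hg'_sub : ∀ t ∈ Icc (0 : ℝ) 1, |g' t - g' 0| ≤ M := fun t ht => by
    have := (convex_Icc (0 : ℝ) 1).norm_image_sub_le_of_norm_hasDerivWithin_le hg' hM h0 ht
    simp only [Real.norm_eq_abs, sub_zero, abs_of_nonneg ht.1] at this
    nlinarith [ht.2]
  have := (convex_Icc (0 : ℝ) 1).norm_image_sub_le_of_norm_hasDerivWithin_le
    (f := fun t => g t - t * g' 0)
    (fun t ht => (hg t ht).sub (hasDerivAt_mul_const _).hasDerivWithinAt)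
    hg'_sub h0 (right_mem_Icc.2 zero_le_one)
  simpa [Real.norm_eq_abs, sub_right_comm] using this

theorem abs_sub_sub_fderiv_le {E : Type*} [NormedAddCommGroup E] [NormedSpace ℝ E]
    {f : E → ℝ} (hf : ContDiff ℝ 2 f) {x y : E} {M : ℝ}
    (hM : ∀ z ∈ segment ℝ x y, |fderiv ℝ (fderiv ℝ f) z (y - x) (y - x)| ≤ M) :
    |f y - f x - fderiv ℝ f x (y - x)| ≤ M := by
  set γ : ℝ → E := fun t => x + t • (y - x)
  have hγ : ∀ t, HasDerivAt γ (y - x) t := fun t => by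
    simpa [γ] using ((hasDerivAt_id t).smul_const (y - x)).const_add x
  have hf1 : Differentiable ℝ f := hf.differentiable two_ne_zero
  have hf2 : Differentiable ℝ (fderiv ℝ f) :=
    (hf.fderiv_right (m := 1) le_rfl).differentiable one_ne_zero
  have := abs_sub_sub_deriv_le (g := f ∘ γ) (g' := fun t => fderiv ℝ f (γ t) (y - x))
    (g'' := fun t => fderiv ℝ (fderiv ℝ f) (γ t) (y - x) (y - x))
    (fun t _ => ((hf1 _).hasFDerivAt.comp_hasDerivAt t (hγ t)).hasDerivWithinAt)
    (fun t _ => (((hf2 _).hasFDerivAt.clm_apply (hasFDerivAt_const _ _)).comp_hasDerivAt t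
      (hγ t)).hasDerivWithinAt.congr_deriv
        (by simp only [ContinuousLinearMap.comp_zero, zero_add, ContinuousLinearMap.flip_apply]))
    (fun t ht => hM _ (segment_eq_image' ℝ x y ▸ mem_image_of_mem _ ht))
  simpa [γ] using this

open Finset in
theorem abs_sub_sum_mul_le_of_linear_approx {ι E : Type*} [Fintype ι] [AddCommGroup E]
    [Module ℝ E] (f : E → ℝ) (L : E →ₗ[ℝ] ℝ) {M : ℝ} (v : ι → E) (lam : ι → ℝ)
    (hlam0 : ∀ k, 0 ≤ lam k) (hsum : ∑ k, lam k = 1)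
    (hM : ∀ k, |f (v k) - f (∑ k, lam k • v k) - L (v k - ∑ k, lam k • v k)| ≤ M) :
    |f (∑ k, lam k • v k) - ∑ k, lam k * f (v k)| ≤ M := by
  set x := ∑ k, lam k • v k
  have hL : ∑ k, lam k * L (v k - x) = 0 := by
    simp only [← smul_eq_mul, ← map_smul, ← map_sum, smul_sub, sum_sub_distrib, ← sum_smul, hsum,
      one_smul, x, sub_self, map_zero]
  have hsplit : f x - ∑ k, lam k * f (v k) = -∑ k, lam k * (f (v k) - f x - L (v k - x)) := by
    simp only [mul_sub, sum_sub_distrib, hL, ← sum_mul, hsum]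
    ring
  calc |f x - ∑ k, lam k * f (v k)|
      ≤ ∑ k, |lam k * (f (v k) - f x - L (v k - x))| := by
        rw [hsplit, abs_neg]; exact abs_sum_le_sum_abs _ _
    _ ≤ ∑ k, lam k * M := by
        gcongr with k
        rw [abs_mul, abs_of_nonneg (hlam0 k)]
        exact mul_le_mul_of_nonneg_left (hM k) (hlam0 k)
    _ = M := by rw [← sum_mul, hsum, one_mul]

theorem affine_interpolation_error_general {n : ℕ}
    (v : Fin (n + 1) → (Fin n → ℝ))
    (h β : ℝ)
    (hdiam : ∀ p ∈ convexHull ℝ (Set.range v), ∀ q ∈ convexHull ℝ (Set.range v),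
      euclNorm (p - q) ≤ h)
    (f : (Fin n → ℝ) → ℝ) (hf : ContDiff ℝ 2 f)
    (hH : ∀ y ∈ convexHull ℝ (Set.range v), matSpectralNorm (hessian f y) ≤ β)
    (lam : Fin (n + 1) → ℝ) (hlam0 : ∀ k, 0 ≤ lam k) (hsum : ∑ k, lam k = 1)
    (x : Fin n → ℝ) (hbar : x = ∑ k, lam k • v k) :
    |f x - ∑ k, lam k * f (v k)| ≤ β * h ^ 2 := by
  have hconv := convex_convexHull ℝ (Set.range v)
  have hvT : ∀ k, v k ∈ convexHull ℝ (Set.range v) := fun k => subset_convexHull ℝ _ ⟨k, rfl⟩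
  have hxT : x ∈ convexHull ℝ (Set.range v) :=
    hbar ▸ hconv.sum_mem (fun k _ => hlam0 k) hsum (fun k _ => hvT k)
  have hβ : 0 ≤ β := (matSpectralNorm_nonneg _).trans (hH x hxT)
  have hf2 : Differentiable ℝ (fderiv ℝ f) :=
    (hf.fderiv_right (m := 1) le_rfl).differentiable one_ne_zero
  subst hbar
  refine abs_sub_sum_mul_le_of_linear_approx f (fderiv ℝ f _) v lam hlam0 hsum fun k =>
    abs_sub_sub_fderiv_le hf fun z hz => ?_
  have hzT := hconv.segment_subset hxT (hvT k) hz
  rw [fderiv_fderiv_apply_eq_dotProduct_hessian (hf2 z)]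
  calc _ ≤ matSpectralNorm (hessian f z) * euclNorm (v k - _) ^ 2 := abs_dotProduct_mulVec_le _ _
    _ ≤ β * h ^ 2 := by
        gcongr
        · exact hH z hzT
        · exact Real.sqrt_nonneg _
        · exact hdiam _ (hvT k) _ hxT

/-- affine interpolation error on a simplex: if `‖H(x)‖₂ ≤ β` on the simplex `T`
of diameter `h`, then `|f(x) - Σ λ_k f(x_k)| ≤ β h²`. -/
theorem affine_interpolation_error {n : ℕ}
    (v : Fin (n + 1) → (Fin n → ℝ)) (hv : AffineIndependent ℝ v)
    (h β : ℝ)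
    (hdiam : ∀ p ∈ convexHull ℝ (Set.range v), ∀ q ∈ convexHull ℝ (Set.range v),
      euclNorm (p - q) ≤ h)
    (f : (Fin n → ℝ) → ℝ) (hf : ContDiff ℝ 2 f)
    (hH : ∀ y ∈ convexHull ℝ (Set.range v), matSpectralNorm (hessian f y) ≤ β)
    (lam : Fin (n + 1) → ℝ) (hlam0 : ∀ k, 0 ≤ lam k) (hsum : ∑ k, lam k = 1)
    (x : Fin n → ℝ) (hbar : x = ∑ k, lam k • v k) :
    |f x - ∑ k, lam k * f (v k)| ≤ β * h ^ 2 :=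
  affine_interpolation_error_general v h β hdiam f hf hH lam hlam0 hsum x hbar
end

section
/- Let T = co(x_0,...,x_n) be a simplex of diameter h and μ : T → ℝ affine with ‖∇μ‖_∞ ≤ D^μ, and P : T → 𝒮_n the matrix-valued function whose entries P_{ij} are affine with ‖∇P_{ij}‖₁ ≤ D for all i,j. Then for any x = Σ_k λ_k x_k ∈ T (barycentric coordinates), ‖μ(x)P(x) − Σ_k λ_k μ(x_k)P(x_k)‖₂ ≤ 2 n √n D D^μ h². -/
open Matrix

/-- Spectral (ℓ²-operator) norm of a real `n×n` matrix. -/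
noncomputable def spectralNormMat {n : ℕ} (A : Matrix (Fin n) (Fin n) ℝ) : ℝ :=
  sSup {r : ℝ | ∃ x : Fin n → ℝ, euclNorm x = 1 ∧ r = euclNorm (A.mulVec x)}

/-!
For affine `f, g` and convex weights `λ` with `x = ∑ λₖ xₖ`, the interpolation error of the
product is a weighted covariance:
`f(x) g(x) - ∑ λₖ f(xₖ) g(xₖ) = -∑ λₖ (f(xₖ) - f(x)) (g(xₖ) - g(x))`.
Both factors are controlled by a gradient bound times `‖xₖ - x‖ ≤ h`, giving every entry
of the error matrix the bound `√n D Dμ h²`, and an `n × n` matrix has spectral norm at most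
`n` times its largest entry.
-/

section Norms

variable {n : ℕ}

lemma euclNorm_nonneg (z : Fin n → ℝ) : 0 ≤ euclNorm z := Real.sqrt_nonneg _

lemma abs_apply_le_euclNorm (z : Fin n → ℝ) (l : Fin n) : |z l| ≤ euclNorm z := by
  rw [euclNorm, ← Real.sqrt_sq_eq_abs]
  exact Real.sqrt_le_sqrt (Finset.single_le_sum (fun i _ => sq_nonneg (z i)) (Finset.mem_univ l))

lemma sum_abs_le_sqrt_mul_euclNorm (z : Fin n → ℝ) : ∑ l, |z l| ≤ √n * euclNorm z := by
  have hsq : (∑ l, |z l|) ^ 2 ≤ n * ∑ l, z l ^ 2 := by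
    simpa [sq_abs] using sq_sum_le_card_mul_sum_sq (s := Finset.univ) (f := fun l => |z l|)
  rw [euclNorm, ← Real.sqrt_mul (Nat.cast_nonneg n),
    ← Real.sqrt_sq (Finset.sum_nonneg fun l _ => abs_nonneg (z l))]
  exact Real.sqrt_le_sqrt hsq

lemma euclNorm_le_sqrt_mul_of_abs_le {z : Fin n → ℝ} {M : ℝ} (hM : 0 ≤ M)
    (hz : ∀ i, |z i| ≤ M) : euclNorm z ≤ √n * M := by
  rw [euclNorm, ← Real.sqrt_sq hM, ← Real.sqrt_mul (Nat.cast_nonneg n)]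
  refine Real.sqrt_le_sqrt ?_
  calc ∑ i, z i ^ 2 ≤ ∑ _i : Fin n, M ^ 2 :=
        Finset.sum_le_sum fun i _ => sq_le_sq.mpr ((hz i).trans (le_abs_self M))
    _ = n * M ^ 2 := by simp

end Norms

section DotProduct

variable {m : Type*} [Fintype m]

lemma abs_dotProduct_le_sum_abs_mul (w z : m → ℝ) : |w ⬝ᵥ z| ≤ ∑ l, |w l| * |z l| := by
  simpa [abs_mul, dotProduct] using Finset.abs_sum_le_sum_abs (fun l => w l * z l) Finset.univ

lemma abs_dotProduct_le_of_abs_le {n : ℕ} {w : Fin n → ℝ} {M : ℝ} (hM : 0 ≤ M)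
    (hw : ∀ l, |w l| ≤ M) (z : Fin n → ℝ) : |w ⬝ᵥ z| ≤ M * (√n * euclNorm z) :=
  calc |w ⬝ᵥ z| ≤ ∑ l, |w l| * |z l| := abs_dotProduct_le_sum_abs_mul w z
    _ ≤ ∑ l, M * |z l| :=
        Finset.sum_le_sum fun l _ => mul_le_mul_of_nonneg_right (hw l) (abs_nonneg _)
    _ = M * ∑ l, |z l| := (Finset.mul_sum _ _ _).symm
    _ ≤ M * (√n * euclNorm z) := mul_le_mul_of_nonneg_left (sum_abs_le_sqrt_mul_euclNorm z) hM

lemma abs_dotProduct_le_of_sum_abs_le {n : ℕ} {w : Fin n → ℝ} {D : ℝ}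
    (hw : ∑ l, |w l| ≤ D) (z : Fin n → ℝ) : |w ⬝ᵥ z| ≤ D * euclNorm z :=
  calc |w ⬝ᵥ z| ≤ ∑ l, |w l| * |z l| := abs_dotProduct_le_sum_abs_mul w z
    _ ≤ ∑ l, |w l| * euclNorm z :=
        Finset.sum_le_sum fun l _ =>
          mul_le_mul_of_nonneg_left (abs_apply_le_euclNorm z l) (abs_nonneg _)
    _ = (∑ l, |w l|) * euclNorm z := (Finset.sum_mul _ _ _).symm
    _ ≤ D * euclNorm z := mul_le_mul_of_nonneg_right hw (euclNorm_nonneg z)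

lemma dotProduct_sum_smul_add {ι : Type*} [Fintype ι] {lam : ι → ℝ} (hsum : ∑ k, lam k = 1)
    (v : ι → m → ℝ) (w : m → ℝ) (c : ℝ) :
    w ⬝ᵥ (∑ k, lam k • v k) + c = ∑ k, lam k * (w ⬝ᵥ v k + c) := by
  simp [dotProduct_sum, mul_add, Finset.sum_add_distrib, ← Finset.sum_mul, hsum]

end DotProduct

section Covariance

variable {ι : Type*} [Fintype ι]

lemma sum_mul_mul_eq_mul_add_sum_mul_sub_mul_sub {R : Type*} [CommRing R] {w : ι → R}
    (hw : ∑ k, w k = 1) {α β : ι → R} {y z : R}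
    (hy : y = ∑ k, w k * α k) (hz : z = ∑ k, w k * β k) :
    ∑ k, w k * (α k * β k) = y * z + ∑ k, w k * ((α k - y) * (β k - z)) := by
  have hexpand : ∑ k, w k * ((α k - y) * (β k - z)) = ∑ k, w k * (α k * β k)
      - y * ∑ k, w k * β k - z * ∑ k, w k * α k + y * z * ∑ k, w k := by
    simp only [Finset.mul_sum, ← Finset.sum_sub_distrib, ← Finset.sum_add_distrib]
    exact Finset.sum_congr rfl fun k _ => by ring
  rw [hexpand, hw, ← hy, ← hz]
  ring

lemma abs_mul_sub_sum_mul_le {lam : ι → ℝ} (hlam0 : ∀ k, 0 ≤ lam k)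
    (hsum : ∑ k, lam k = 1) {α β : ι → ℝ} {y z A B : ℝ}
    (hy : y = ∑ k, lam k * α k) (hz : z = ∑ k, lam k * β k)
    (hA : ∀ k, |α k - y| ≤ A) (hB : ∀ k, |β k - z| ≤ B) :
    |y * z - ∑ k, lam k * (α k * β k)| ≤ A * B := by
  rw [sum_mul_mul_eq_mul_add_sum_mul_sub_mul_sub hsum hy hz, sub_add_cancel_left, abs_neg]
  calc |∑ k, lam k * ((α k - y) * (β k - z))|
      ≤ ∑ k, |lam k * ((α k - y) * (β k - z))| := Finset.abs_sum_le_sum_abs _ _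
    _ ≤ ∑ k, lam k * (A * B) := Finset.sum_le_sum fun k _ => by
        rw [abs_mul, abs_of_nonneg (hlam0 k), abs_mul]
        exact mul_le_mul_of_nonneg_left
          (mul_le_mul (hA k) (hB k) (abs_nonneg _) ((abs_nonneg _).trans (hA k))) (hlam0 k)
    _ = A * B := by rw [← Finset.sum_mul, hsum, one_mul]

end Covariance

section SpectralNorm

variable {n : ℕ}

lemma spectralNormMat_nonneg (A : Matrix (Fin n) (Fin n) ℝ) : 0 ≤ spectralNormMat A :=
  Real.sSup_nonneg fun _ ⟨_, _, hr⟩ => hr ▸ euclNorm_nonneg _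

lemma spectralNormMat_le_of_abs_apply_le {A : Matrix (Fin n) (Fin n) ℝ} {C : ℝ}
    (hA : ∀ i j, |A i j| ≤ C) : spectralNormMat A ≤ n * C := by
  rcases n.eq_zero_or_pos with rfl | hn
  · simp [spectralNormMat, euclNorm]
  have hC : 0 ≤ C := (abs_nonneg _).trans (hA ⟨0, hn⟩ ⟨0, hn⟩)
  refine Real.sSup_le ?_ (by positivity)
  rintro r ⟨u, hu, rfl⟩
  have hrow : ∀ i, |(A *ᵥ u) i| ≤ C * √n := fun i => by
    simpa [hu, mulVec] using abs_dotProduct_le_of_abs_le hC (hA i) u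
  calc euclNorm (A *ᵥ u) ≤ √n * (C * √n) :=
        euclNorm_le_sqrt_mul_of_abs_le (by positivity) hrow
    _ = n * C := by rw [mul_comm C, ← mul_assoc, Real.mul_self_sqrt (Nat.cast_nonneg n)]

end SpectralNorm

theorem interpolation_error_mu_P_general {n : ℕ}
    (v : Fin (n + 1) → (Fin n → ℝ))
    (h D Dμ : ℝ)
    (hdiam : ∀ p ∈ convexHull ℝ (Set.range v), ∀ q ∈ convexHull ℝ (Set.range v),
      euclNorm (p - q) ≤ h)
    (a : Fin n → ℝ) (cμ : ℝ) (μ : (Fin n → ℝ) → ℝ)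
    (hμ : ∀ y, μ y = a ⬝ᵥ y + cμ) (ha : (⨆ i, |a i|) ≤ Dμ)
    (W : Fin n → Fin n → (Fin n → ℝ)) (c₀ : Matrix (Fin n) (Fin n) ℝ)
    (P : (Fin n → ℝ) → Matrix (Fin n) (Fin n) ℝ)
    (hP : ∀ y i j, P y i j = W i j ⬝ᵥ y + c₀ i j)
    (hW : ∀ i j, (∑ k, |W i j k|) ≤ D)
    (lam : Fin (n + 1) → ℝ) (hlam0 : ∀ k, 0 ≤ lam k) (hsum : ∑ k, lam k = 1)
    (x : Fin n → ℝ) (hbar : x = ∑ k, lam k • v k) :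
    spectralNormMat (μ x • P x - ∑ k, lam k • (μ (v k) • P (v k))) ≤
      2 * n * Real.sqrt n * D * Dμ * h ^ 2 := by
  have hx : x ∈ convexHull ℝ (Set.range v) := hbar ▸ (convex_convexHull ℝ _).sum_mem
    (fun k _ => hlam0 k) hsum fun k _ => subset_convexHull ℝ _ (Set.mem_range_self k)
  have hvx : ∀ k, euclNorm (v k - x) ≤ h := fun k =>
    hdiam _ (subset_convexHull ℝ _ (Set.mem_range_self k)) _ hx
  have hDμ : 0 ≤ Dμ := (Real.iSup_nonneg fun i => abs_nonneg (a i)).trans ha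
  have habs : ∀ l, |a l| ≤ Dμ := fun l => (le_ciSup (Set.finite_range _).bddAbove l).trans ha
  have hentry : ∀ i j, |(μ x • P x - ∑ k, lam k • (μ (v k) • P (v k))) i j|
      ≤ Dμ * (√n * h) * (D * h) := fun i j => by
    simp only [Matrix.sub_apply, Matrix.smul_apply, Matrix.sum_apply, smul_eq_mul]
    refine abs_mul_sub_sum_mul_le hlam0 hsum ?_ ?_ (fun k => ?_) (fun k => ?_)
    · simp only [hμ, hbar, dotProduct_sum_smul_add hsum]
    · simp only [hP, hbar, dotProduct_sum_smul_add hsum]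
    · rw [hμ, hμ, add_sub_add_right_eq_sub, ← dotProduct_sub]
      exact (abs_dotProduct_le_of_abs_le hDμ habs _).trans (by gcongr; exact hvx k)
    · have hD : 0 ≤ D := (Finset.sum_nonneg fun _ _ => abs_nonneg _).trans (hW i j)
      rw [hP, hP, add_sub_add_right_eq_sub, ← dotProduct_sub]
      exact (abs_dotProduct_le_of_sum_abs_le (hW i j) _).trans (by gcongr; exact hvx k)
  have hbound := spectralNormMat_le_of_abs_apply_le hentry
  have hnonneg := spectralNormMat_nonneg (μ x • P x - ∑ k, lam k • (μ (v k) • P (v k)))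
  linarith

/-- interpolation error for the product `μ(x)P(x)` of an affine scalar function
`μ` (with `‖∇μ‖_∞ ≤ Dμ`) and a matrix-valued function `P` with affine symmetric-matrix values
(entry gradients bounded by `D` in the ℓ¹ norm), on a simplex of diameter `h`:
`‖μ(x)P(x) - Σ_k λ_k μ(x_k)P(x_k)‖₂ ≤ 2 n √n D Dμ h²`. -/
theorem interpolation_error_mu_P {n : ℕ}
    (v : Fin (n + 1) → (Fin n → ℝ)) (hv : AffineIndependent ℝ v)
    (h D Dμ : ℝ)
    (hdiam : ∀ p ∈ convexHull ℝ (Set.range v), ∀ q ∈ convexHull ℝ (Set.range v),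
      euclNorm (p - q) ≤ h)
    (a : Fin n → ℝ) (cμ : ℝ) (μ : (Fin n → ℝ) → ℝ)
    (hμ : ∀ y, μ y = a ⬝ᵥ y + cμ) (ha : (⨆ i, |a i|) ≤ Dμ)
    (W : Fin n → Fin n → (Fin n → ℝ)) (c₀ : Matrix (Fin n) (Fin n) ℝ)
    (P : (Fin n → ℝ) → Matrix (Fin n) (Fin n) ℝ)
    (hP : ∀ y i j, P y i j = W i j ⬝ᵥ y + c₀ i j)
    (hPsymm : ∀ y, y ∈ convexHull ℝ (Set.range v) → (P y).IsSymm)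
    (hW : ∀ i j, (∑ k, |W i j k|) ≤ D)
    (lam : Fin (n + 1) → ℝ) (hlam0 : ∀ k, 0 ≤ lam k) (hsum : ∑ k, lam k = 1)
    (x : Fin n → ℝ) (hbar : x = ∑ k, lam k • v k) :
    spectralNormMat (μ x • P x - ∑ k, lam k • (μ (v k) • P (v k))) ≤
      2 * n * Real.sqrt n * D * Dμ * h ^ 2 :=
  interpolation_error_mu_P_general v h D Dμ hdiam a cμ μ hμ ha W c₀ P hP hW lam hlam0 hsum x hbar
end

section
/- Let g : ℝ^n → ℝ be continuous and piecewise affine with respect to a finite triangulation 𝒯 = {T_ν}, with g(x) = w_ν·x + b_ν on T_ν, and let φ̃_ε be a standard smooth mollifier supported in B_ε(0). Then for every x in the ε-interior of the triangulated domain, ∇(g * φ̃_ε)(x) = Σ_ν α_ν^{x,ε} w_ν, where α_ν^{x,ε} := ∫_{T_ν ∩ B_ε(x)} φ̃_ε(x − y) dy ≥ 0 and Σ_ν α_ν^{x,ε} = 1. -/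
open Matrix MeasureTheory

open Metric Set in
/-- A continuous function that is affine on each member of a finite family of closed convex
sets is Lipschitz on any convex set covered by the family. -/
theorem aux_lipschitzOnWith {E : Type*} [NormedAddCommGroup E] [InnerProductSpace ℝ E]
    {m : ℕ} (T : Fin m → Set E)
    (hTcl : ∀ ν, IsClosed (T ν)) (hTconv : ∀ ν, Convex ℝ (T ν))
    (g : E → ℝ) (hg : Continuous g)
    (w : Fin m → E) (b : Fin m → ℝ)
    (hgaff : ∀ ν, ∀ y ∈ T ν, g y = inner ℝ (w ν) y + b ν)
    (s : Set E) (hs : Convex ℝ s) (hsub : s ⊆ ⋃ ν, T ν)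
    (K : NNReal) (hK : ∀ ν, ‖w ν‖₊ ≤ K) :
    LipschitzOnWith K g s := by
  rw [lipschitzOnWith_iff_dist_le_mul]
  intro p hp q hq
  set γ : ℝ → E := fun t => p + t • (q - p) with hγ
  have hγcont : Continuous γ := by fun_prop
  have hγmem : ∀ t ∈ Set.Icc (0:ℝ) 1, γ t ∈ s := by
    intro t ht
    have h := hs hq hp ht.1 (by linarith [ht.2] : (0:ℝ) ≤ 1 - t) (by ring)
    have : γ t = t • q + (1 - t) • p := by
      simp only [hγ, smul_sub, sub_smul, one_smul]
      abel
    rw [this]; exact h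
  set L : ℝ := (K : ℝ) * dist q p with hL
  have hL0 : 0 ≤ L := mul_nonneg K.coe_nonneg dist_nonneg
  have key : Set.Icc (0:ℝ) 1 ⊆ {t | dist (g (γ t)) (g p) ≤ L * t} := by
    apply IsClosed.Icc_subset_of_forall_exists_gt
    · exact (isClosed_le (by fun_prop) (by fun_prop)).inter isClosed_Icc
    · simp [hγ]
    · rintro t ⟨htS, ht0, ht1⟩ y' hy'
      set c : ℝ := min y' 1 with hc
      have htc : t < c := lt_min hy' ht1
      have h1 : Set.Ioc t c ∈ nhdsWithin t (Set.Ioi t) := Ioc_mem_nhdsGT htc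
      have h2 : ∀ᶠ u in nhdsWithin t (Set.Ioi t), ∃ ν, γ u ∈ T ν := by
        filter_upwards [h1] with u hu
        exact Set.mem_iUnion.mp (hsub (hγmem u ⟨le_trans ht0 hu.1.le, hu.2.trans (min_le_right _ _)⟩))
      have h3 : ∃ ν, ∃ᶠ u in nhdsWithin t (Set.Ioi t), γ u ∈ T ν := by
        by_contra hcon
        push_neg at hcon
        have hall : ∀ᶠ u in nhdsWithin t (Set.Ioi t), ∀ ν, γ u ∉ T ν :=
          Filter.eventually_all.mpr hcon
        obtain ⟨u, ⟨ν, hν⟩, h'⟩ := (h2.and hall).exists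
        exact h' ν hν
      obtain ⟨ν, hν⟩ := h3
      have htT : γ t ∈ T ν := by
        have hcl : IsClosed (γ ⁻¹' T ν) := (hTcl ν).preimage hγcont
        exact hcl.closure_subset (mem_closure_iff_frequently.mpr (hν.filter_mono nhdsWithin_le_nhds))
      obtain ⟨t', ht'T, ht'mem⟩ := (hν.and_eventually h1).exists
      obtain ⟨ht'1, ht'2⟩ := ht'mem
      refine ⟨t', ⟨?_, ht'1, ht'2.trans (min_le_left _ _)⟩⟩
      have hgdiff : g (γ t') - g (γ t) = (t' - t) * inner ℝ (w ν) (q - p) := by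
        rw [hgaff ν _ ht'T, hgaff ν _ htT]
        have h4 : γ t' - γ t = (t' - t) • (q - p) := by
          simp only [hγ, sub_smul]; abel
        have h5 : (inner ℝ (w ν) (γ t') : ℝ) - inner ℝ (w ν) (γ t) = inner ℝ (w ν) (γ t' - γ t) := by
          rw [inner_sub_right]
        calc (inner ℝ (w ν) (γ t') : ℝ) + b ν - (inner ℝ (w ν) (γ t) + b ν)
            = inner ℝ (w ν) (γ t') - inner ℝ (w ν) (γ t) := by ring
          _ = inner ℝ (w ν) (γ t' - γ t) := h5
          _ = (t' - t) * inner ℝ (w ν) (q - p) := by rw [h4, real_inner_smul_right]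
      have hb : |(inner ℝ (w ν) (q - p) : ℝ)| ≤ L := by
        calc |(inner ℝ (w ν) (q - p) : ℝ)| ≤ ‖w ν‖ * ‖q - p‖ := abs_real_inner_le_norm _ _
          _ ≤ (K : ℝ) * dist q p := by
              rw [← dist_eq_norm]
              exact mul_le_mul_of_nonneg_right (hK ν) dist_nonneg
      show dist (g (γ t')) (g p) ≤ L * t'
      calc dist (g (γ t')) (g p) ≤ dist (g (γ t')) (g (γ t)) + dist (g (γ t)) (g p) :=
            dist_triangle _ _ _
        _ ≤ L * (t' - t) + L * t := by
            refine add_le_add ?_ htS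
            rw [Real.dist_eq, hgdiff, abs_mul, abs_of_pos (by linarith : (0:ℝ) < t' - t), mul_comm L (t' - t)]
            exact mul_le_mul_of_nonneg_left hb (by linarith)
        _ = L * t' := by ring
  have h1 : dist (g (γ 1)) (g p) ≤ L * 1 := key ⟨zero_le_one, le_rfl⟩
  have hγ1 : γ 1 = q := by simp [hγ]
  rw [hγ1] at h1
  calc dist (g p) (g q) = dist (g q) (g p) := dist_comm _ _
    _ ≤ L * 1 := h1
    _ = (K : ℝ) * dist p q := by rw [mul_one, hL, dist_comm]

set_option maxHeartbeats 1000000 in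
/-- gradient of the mollification of a continuous piecewise affine function:
`∇(g * φ̃_ε)(x) = Σ_ν α_ν w_ν`, where `α_ν = ∫_{T_ν ∩ B_ε(x)} φ̃_ε(x−y) dy ≥ 0` and
`Σ_ν α_ν = 1`. -/
theorem gradient_mollified_cpa {n m : ℕ}
    (V : Fin m → Fin (n + 1) → EuclideanSpace ℝ (Fin n))
    (hV : ∀ ν, AffineIndependent ℝ (V ν))
    (T : Fin m → Set (EuclideanSpace ℝ (Fin n)))
    (hT : ∀ ν, T ν = convexHull ℝ (Set.range (V ν)))
    (hfaces : ∀ ν μ, ν ≠ μ → interior (T ν) ∩ interior (T μ) = ∅)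
    (D : Set (EuclideanSpace ℝ (Fin n))) (hD : D = ⋃ ν, T ν)
    (g : EuclideanSpace ℝ (Fin n) → ℝ) (hg : Continuous g)
    (w : Fin m → EuclideanSpace ℝ (Fin n)) (b : Fin m → ℝ)
    (hgaff : ∀ ν, ∀ y ∈ T ν, g y = inner ℝ (w ν) y + b ν)
    (ε : ℝ) (hε : 0 < ε)
    (φ : EuclideanSpace ℝ (Fin n) → ℝ) (hφ : ContDiff ℝ (⊤ : ℕ∞) φ) (hφ0 : ∀ y, 0 ≤ φ y)
    (hφsupp : Function.support φ ⊆ Metric.ball 0 ε)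
    (hφint : ∫ y, φ y = 1)
    (x : EuclideanSpace ℝ (Fin n)) (hx : Metric.closedBall x ε ⊆ D)
    (α : Fin m → ℝ)
    (hα : ∀ ν, α ν = ∫ y in T ν ∩ Metric.ball x ε, φ (x - y)) :
    (∀ ν, 0 ≤ α ν) ∧ (∑ ν, α ν = 1) ∧
    gradient (fun z => ∫ y in D, g y * φ (z - y)) x = ∑ ν, α ν • w ν := by
  classical
  -- ## Basic facts about the triangulation
  have hTcomp : ∀ ν, IsCompact (T ν) := fun ν => by
    rw [hT ν]; exact (Set.finite_range (V ν)).isCompact_convexHull ℝ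
  have hTcl : ∀ ν, IsClosed (T ν) := fun ν => (hTcomp ν).isClosed
  have hTconv : ∀ ν, Convex ℝ (T ν) := fun ν => by rw [hT ν]; exact convex_convexHull ℝ _
  have hTmeas : ∀ ν, MeasurableSet (T ν) := fun ν => (hTcl ν).measurableSet
  have hDcl : IsClosed D := by
    rw [hD]; exact isClosed_iUnion_of_finite (fun ν => hTcl ν)
  have hDmeas : MeasurableSet D := hDcl.measurableSet
  have hfront : ∀ ν, volume (frontier (T ν)) = 0 := fun ν => (hTconv ν).addHaar_frontier volume
  have hball_subset : Metric.ball x ε ⊆ D := fun y hy => hx (Metric.ball_subset_closedBall hy)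
  -- ## Basic facts about the mollifier
  have hφcont : Continuous φ := hφ.continuous
  have hφ_zero : ∀ u : EuclideanSpace ℝ (Fin n), ε ≤ ‖u‖ → φ u = 0 := by
    intro u hu
    by_contra h
    have := hφsupp (Function.mem_support.mpr h)
    rw [mem_ball_zero_iff] at this
    linarith
  have hφc : HasCompactSupport φ := by
    apply HasCompactSupport.intro (isCompact_closedBall (0 : EuclideanSpace ℝ (Fin n)) ε)
    intro y hy
    apply hφ_zero
    rw [Metric.mem_closedBall, dist_zero_right, not_le] at hy
    exact hy.le
  have hφint' : Integrable φ := hφcont.integrable_of_hasCompactSupport hφc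
  have hdφ_zero : ∀ u : EuclideanSpace ℝ (Fin n), ε < ‖u‖ → fderiv ℝ φ u = 0 := by
    intro u hu
    have hopen : IsOpen {v : EuclideanSpace ℝ (Fin n) | ε < ‖v‖} :=
      isOpen_lt continuous_const continuous_norm
    have hev : φ =ᶠ[nhds u] (fun _ => (0 : ℝ)) := by
      filter_upwards [hopen.mem_nhds hu] with v hv using hφ_zero v (le_of_lt hv)
    rw [hev.fderiv_eq]
    exact fderiv_const_apply 0
  -- function y ↦ φ (x - y)
  have hmoll_cont : Continuous (fun y : EuclideanSpace ℝ (Fin n) => φ (x - y)) :=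
    hφcont.comp (continuous_const.sub continuous_id)
  have hmoll_supp : HasCompactSupport (fun y : EuclideanSpace ℝ (Fin n) => φ (x - y)) := by
    apply HasCompactSupport.intro (isCompact_closedBall x ε)
    intro y hy
    apply hφ_zero
    rw [Metric.mem_closedBall, not_le, dist_comm, dist_eq_norm] at hy
    exact hy.le
  have hmoll_int : Integrable (fun y : EuclideanSpace ℝ (Fin n) => φ (x - y)) :=
    hmoll_cont.integrable_of_hasCompactSupport hmoll_supp
  have hmoll_zero : ∀ y ∉ Metric.ball x ε, φ (x - y) = 0 := by
    intro y hy
    apply hφ_zero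
    rw [Metric.mem_ball, not_lt, dist_comm, dist_eq_norm] at hy
    exact hy
  -- ## Part 1
  have hα_nonneg : ∀ ν, 0 ≤ α ν := by
    intro ν
    rw [hα ν]
    exact setIntegral_nonneg ((hTmeas ν).inter measurableSet_ball) (fun y _ => hφ0 _)
  -- ## Part 2
  have hIcap : ∀ ν μ', ν ≠ μ' → volume (T ν ∩ T μ') = 0 := by
    intro ν μ' hne
    have hsub2 : T ν ∩ T μ' ⊆ frontier (T ν) ∪ frontier (T μ') := by
      intro p hp
      by_cases h1 : p ∈ interior (T ν)
      · right
        have h2 : p ∉ interior (T μ') := fun h2 =>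
          Set.eq_empty_iff_forall_notMem.mp (hfaces ν μ' hne) p ⟨h1, h2⟩
        exact ⟨subset_closure hp.2, h2⟩
      · exact Or.inl ⟨subset_closure hp.1, h1⟩
    exact measure_mono_null hsub2 (measure_union_null (hfront ν) (hfront μ'))
  have hsum : ∑ ν, α ν = 1 := by
    have hU : (⋃ ν, T ν ∩ Metric.ball x ε) = Metric.ball x ε := by
      rw [← Set.iUnion_inter, ← hD]
      exact Set.inter_eq_right.mpr hball_subset
    have hAE : Pairwise (Function.onFun (AEDisjoint volume) fun ν => T ν ∩ Metric.ball x ε) := by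
      intro ν μ' hne
      exact measure_mono_null
        (Set.inter_subset_inter Set.inter_subset_left Set.inter_subset_left)
        (hIcap ν μ' hne)
    calc ∑ ν, α ν = ∑ ν, ∫ y in T ν ∩ Metric.ball x ε, φ (x - y) :=
          Finset.sum_congr rfl fun ν _ => hα ν
      _ = ∑' ν, ∫ y in T ν ∩ Metric.ball x ε, φ (x - y) := (tsum_fintype _).symm
      _ = ∫ y in ⋃ ν, T ν ∩ Metric.ball x ε, φ (x - y) := by
          refine (integral_iUnion_ae
            (fun ν => ((hTmeas ν).inter measurableSet_ball).nullMeasurableSet) hAE ?_).symm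
          rw [hU]
          exact hmoll_int.integrableOn
      _ = ∫ y in Metric.ball x ε, φ (x - y) := by rw [hU]
      _ = ∫ y, φ (x - y) := setIntegral_eq_integral_of_forall_compl_eq_zero hmoll_zero
      _ = ∫ y, φ y := integral_sub_left_eq_self φ volume x
      _ = 1 := hφint
  refine ⟨hα_nonneg, hsum, ?_⟩
  -- ## Part 3
  -- Lipschitz extension of g
  set K : NNReal := Finset.univ.sup (fun ν => ‖w ν‖₊) with hKdef
  have hK : ∀ ν, ‖w ν‖₊ ≤ K := fun ν => Finset.le_sup (f := fun ν => ‖w ν‖₊) (Finset.mem_univ ν)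
  have hglip : LipschitzOnWith K g (Metric.closedBall x ε) := by
    refine aux_lipschitzOnWith T hTcl hTconv g hg w b hgaff _ (convex_closedBall x ε) ?_ K hK
    rw [← hD]; exact hx
  obtain ⟨G0, hG0lip, hG0eq⟩ := hglip.extend_real
  have hG0cont : Continuous G0 := hG0lip.continuous
  -- convolution setup
  set f : EuclideanSpace ℝ (Fin n) → ℝ := D.indicator g with hfdef
  have hfloc : LocallyIntegrable f volume := hg.locallyIntegrable.indicator hDmeas
  have hG0loc : LocallyIntegrable G0 volume := hG0cont.locallyIntegrable
  have hφ1 : ContDiff ℝ 1 φ := hφ.of_le (by simp)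
  set L : ℝ →L[ℝ] ℝ →L[ℝ] ℝ := ContinuousLinearMap.lsmul ℝ ℝ with hLdef
  have hFd : HasFDerivAt (MeasureTheory.convolution f φ L volume)
      (MeasureTheory.convolution f (fderiv ℝ φ)
        (L.precompR (EuclideanSpace ℝ (Fin n))) volume x) x :=
    hφc.hasFDerivAt_convolution_right L hfloc hφ1 x
  have hGd : HasFDerivAt (MeasureTheory.convolution G0 φ L volume)
      (MeasureTheory.convolution G0 (fderiv ℝ φ)
        (L.precompR (EuclideanSpace ℝ (Fin n))) volume x) x :=
    hφc.hasFDerivAt_convolution_right L hG0loc hφ1 x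
  -- the mollified function is the convolution of f with φ
  have hFeq : (fun z => ∫ y in D, g y * φ (z - y)) = MeasureTheory.convolution f φ L volume := by
    funext z
    rw [MeasureTheory.convolution_def, ← integral_indicator hDmeas]
    congr 1
    funext y
    by_cases hy : y ∈ D
    · simp [hfdef, hy, hLdef]
    · simp [hfdef, hy, hLdef]
  -- the two derivative candidates coincide
  have hsamederiv : MeasureTheory.convolution f (fderiv ℝ φ)
        (L.precompR (EuclideanSpace ℝ (Fin n))) volume x
      = MeasureTheory.convolution G0 (fderiv ℝ φ)
        (L.precompR (EuclideanSpace ℝ (Fin n))) volume x := by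
    rw [MeasureTheory.convolution_def, MeasureTheory.convolution_def]
    congr 1
    funext y
    by_cases hy : y ∈ Metric.closedBall x ε
    · have h1 : f y = G0 y := by
        rw [hfdef, Set.indicator_of_mem (hx hy)]
        exact hG0eq hy
      rw [h1]
    · have h0 : fderiv ℝ φ (x - y) = 0 := by
        apply hdφ_zero
        rw [Metric.mem_closedBall, not_le, dist_comm, dist_eq_norm] at hy
        exact hy
      rw [h0]
      simp
  -- rewrite the G0-convolution with the kernel on the other side
  have hGflip : MeasureTheory.convolution G0 φ L volume
      = fun z => ∫ u, φ u * G0 (z - u) := by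
    funext z
    rw [MeasureTheory.convolution_def]
    have h := integral_sub_left_eq_self (fun t => G0 t * φ (z - t)) volume z
    simp only [sub_sub_cancel] at h
    calc ∫ t, L (G0 t) (φ (z - t)) = ∫ t, G0 t * φ (z - t) := by congr 1
      _ = ∫ u, G0 (z - u) * φ u := h.symm
      _ = ∫ u, φ u * G0 (z - u) := by congr 1; funext u; rw [mul_comm]
  -- the pieces of the derivative
  set S : Fin m → Set (EuclideanSpace ℝ (Fin n)) :=
    fun ν => (fun u => x - u) ⁻¹' interior (T ν) with hSdef
  have hScont : Continuous (fun u : EuclideanSpace ℝ (Fin n) => x - u) :=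
    continuous_const.sub continuous_id
  have hSopen : ∀ ν, IsOpen (S ν) := fun ν => isOpen_interior.preimage hScont
  have hSmeas : ∀ ν, MeasurableSet (S ν) := fun ν => (hSopen ν).measurableSet
  have hSdisj : ∀ ν μ', ν ≠ μ' → ∀ u, u ∈ S ν → u ∉ S μ' := by
    intro ν μ' hne u h1 h2
    exact Set.eq_empty_iff_forall_notMem.mp (hfaces ν μ' hne) _ ⟨h1, h2⟩
  set F' : EuclideanSpace ℝ (Fin n) → (EuclideanSpace ℝ (Fin n)) →L[ℝ] ℝ :=
    fun u => ∑ ν, Set.indicator (S ν)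
      (fun u' => φ u' • (innerSL ℝ (w ν) : EuclideanSpace ℝ (Fin n) →L[ℝ] ℝ)) u with hF'def
  -- differentiation under the integral sign
  have hbad : ∀ᵐ u : EuclideanSpace ℝ (Fin n), ¬(φ u ≠ 0 ∧ ∀ ν, u ∉ S ν) := by
    have hmp : MeasurePreserving (fun u : EuclideanSpace ℝ (Fin n) => x - u) volume volume :=
      Measure.measurePreserving_sub_left volume x
    have hA : volume (⋃ ν, frontier (T ν)) = 0 := measure_iUnion_null hfront
    have hpre : volume ((fun u : EuclideanSpace ℝ (Fin n) => x - u) ⁻¹'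
        (⋃ ν, frontier (T ν))) = 0 := by
      rw [hmp.measure_preimage
        (MeasurableSet.iUnion (fun ν => isClosed_frontier.measurableSet)).nullMeasurableSet]
      exact hA
    have hsub3 : {u : EuclideanSpace ℝ (Fin n) | φ u ≠ 0 ∧ ∀ ν, u ∉ S ν}
        ⊆ (fun u : EuclideanSpace ℝ (Fin n) => x - u) ⁻¹' (⋃ ν, frontier (T ν)) := by
      rintro u ⟨h1, h2⟩
      have humem : u ∈ Metric.ball (0 : EuclideanSpace ℝ (Fin n)) ε :=
        hφsupp (Function.mem_support.mpr h1)
      have hxu : x - u ∈ Metric.ball x ε := by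
        rw [Metric.mem_ball, dist_eq_norm]
        simpa using mem_ball_zero_iff.mp humem
      have hxuD : x - u ∈ D := hball_subset hxu
      rw [hD] at hxuD
      obtain ⟨ν, hν⟩ := Set.mem_iUnion.mp hxuD
      refine Set.mem_preimage.mpr (Set.mem_iUnion.mpr ⟨ν, ?_⟩)
      exact ⟨subset_closure hν, h2 ν⟩
    rw [ae_iff]
    refine measure_mono_null ?_ hpre
    intro u hu
    simp only [Set.mem_setOf_eq, not_not] at hu
    exact hsub3 hu
  have main := hasFDerivAt_integral_of_dominated_loc_of_lip
    (F := fun (z : EuclideanSpace ℝ (Fin n)) u => φ u * G0 (z - u)) (F' := F') (x₀ := x)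
    (bound := fun u => (K : ℝ) * φ u) (Metric.ball_mem_nhds x zero_lt_one)
    (Filter.Eventually.of_forall fun z =>
      (hφcont.mul (hG0cont.comp (continuous_const.sub continuous_id))).aestronglyMeasurable)
    (by
      refine Continuous.integrable_of_hasCompactSupport ?_ hφc.mul_right
      exact hφcont.mul (hG0cont.comp (continuous_const.sub continuous_id)))
    (by
      refine (Finset.stronglyMeasurable_fun_sum Finset.univ fun ν _ => ?_).aestronglyMeasurable
      exact ((hφcont.smul continuous_const).stronglyMeasurable).indicator (hSmeas ν))
    (Filter.Eventually.of_forall (by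
      intro u
      rw [lipschitzOnWith_iff_dist_le_mul]
      intro z hz z' hz'
      have h1 : dist (φ u * G0 (z - u)) (φ u * G0 (z' - u))
          = |φ u| * dist (G0 (z - u)) (G0 (z' - u)) := by
        rw [Real.dist_eq, Real.dist_eq, ← mul_sub, abs_mul]
      have h2 : dist (G0 (z - u)) (G0 (z' - u)) ≤ (K : ℝ) * dist z z' := by
        have := hG0lip.dist_le_mul (z - u) (z' - u)
        have h3 : dist (z - u) (z' - u) = dist z z' := by
          rw [dist_eq_norm, dist_eq_norm]; congr 1; abel
        rwa [h3] at this
      rw [h1]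
      calc |φ u| * dist (G0 (z - u)) (G0 (z' - u)) ≤ |φ u| * ((K : ℝ) * dist z z') :=
            mul_le_mul_of_nonneg_left h2 (abs_nonneg _)
        _ = ((Real.nnabs ((K : ℝ) * φ u)) : ℝ) * dist z z' := by
            rw [Real.coe_nnabs, abs_mul, abs_of_nonneg (hφ0 u), abs_of_nonneg K.coe_nonneg]
            ring))
    (hφint'.const_mul _)
    (by
      filter_upwards [hbad] with u hu
      by_cases hsν : ∃ ν, u ∈ S ν
      · obtain ⟨ν, hν⟩ := hsν
        have hF'u : F' u = φ u • (innerSL ℝ (w ν) : EuclideanSpace ℝ (Fin n) →L[ℝ] ℝ) := by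
          simp only [hF'def]
          rw [Finset.sum_eq_single ν]
          · exact Set.indicator_of_mem hν _
          · intro μ' _ hne
            exact Set.indicator_of_notMem (hSdisj ν μ' (Ne.symm hne) u hν) _
          · intro h; exact absurd (Finset.mem_univ ν) h
        rw [hF'u]
        by_cases hφu : φ u = 0
        · have heq : (fun z : EuclideanSpace ℝ (Fin n) => φ u * G0 (z - u))
              = fun _ => (0 : ℝ) := funext fun z => by rw [hφu, zero_mul]
          rw [heq, hφu, zero_smul]
          exact hasFDerivAt_const 0 x
        · have humem : u ∈ Metric.ball (0 : EuclideanSpace ℝ (Fin n)) ε :=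
            hφsupp (Function.mem_support.mpr hφu)
          have hxu : x - u ∈ Metric.ball x ε := by
            rw [Metric.mem_ball, dist_eq_norm]
            simpa using mem_ball_zero_iff.mp humem
          have hN : interior (T ν) ∩ Metric.ball x ε ∈ nhds (x - u) :=
            (isOpen_interior.inter Metric.isOpen_ball).mem_nhds ⟨hν, hxu⟩
          have hev : G0 =ᶠ[nhds (x - u)]
              (fun y : EuclideanSpace ℝ (Fin n) => inner ℝ (w ν) y + b ν) := by
            filter_upwards [hN] with y hy
            rw [← hG0eq (Metric.ball_subset_closedBall hy.2), hgaff ν y (interior_subset hy.1)]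
          have haff : HasFDerivAt (fun y : EuclideanSpace ℝ (Fin n) => (inner ℝ (w ν) y : ℝ) + b ν)
              (innerSL ℝ (w ν)) (x - u) := by
            have := ((innerSL ℝ (w ν)).hasFDerivAt (x := x - u)).add_const (b ν)
            simpa using this
          have hG0d : HasFDerivAt G0 (innerSL ℝ (w ν)) (x - u) :=
            haff.congr_of_eventuallyEq hev
          have h1 : HasFDerivAt (fun z : EuclideanSpace ℝ (Fin n) => z - u)
              (ContinuousLinearMap.id ℝ (EuclideanSpace ℝ (Fin n))) x :=
            (hasFDerivAt_id x).sub_const u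
          have hcomp : HasFDerivAt (fun z : EuclideanSpace ℝ (Fin n) => G0 (z - u))
              (innerSL ℝ (w ν)) x := by
            have := hG0d.comp x h1
            simpa [Function.comp_def] using this
          exact hcomp.const_mul (φ u)
      · push_neg at hsν
        have hφu : φ u = 0 := by
          by_contra h
          exact hu ⟨h, hsν⟩
        have hF'u : F' u = 0 := by
          simp only [hF'def]
          apply Finset.sum_eq_zero
          intro ν _
          exact Set.indicator_of_notMem (hsν ν) _
        have heq : (fun z : EuclideanSpace ℝ (Fin n) => φ u * G0 (z - u))
            = fun _ => (0 : ℝ) := funext fun z => by rw [hφu, zero_mul]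
        rw [heq, hF'u]
        exact hasFDerivAt_const 0 x)
  -- identify the derivative
  have hGd2 : HasFDerivAt (MeasureTheory.convolution G0 φ L volume) (∫ u, F' u) x := by
    rw [hGflip]; exact main.2
  have huniq : MeasureTheory.convolution G0 (fderiv ℝ φ)
      (L.precompR (EuclideanSpace ℝ (Fin n))) volume x = ∫ u, F' u := hGd.unique hGd2
  -- compute ∫ F'
  have hintF' : ∫ u, F' u
      = ∑ ν, α ν • (innerSL ℝ (w ν) : EuclideanSpace ℝ (Fin n) →L[ℝ] ℝ) := by
    have hterm_int : ∀ ν : Fin m, Integrable ((S ν).indicator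
        (fun u' => φ u' • (innerSL ℝ (w ν) : EuclideanSpace ℝ (Fin n) →L[ℝ] ℝ))) :=
      fun ν => by
        have := (hφint'.smul_const (innerSL ℝ (w ν) : EuclideanSpace ℝ (Fin n) →L[ℝ] ℝ)).indicator (hSmeas ν)
        exact this
    simp only [hF'def]
    rw [integral_finset_sum _ (fun ν _ => hterm_int ν)]
    refine Finset.sum_congr rfl fun ν _ => ?_
    rw [integral_indicator (hSmeas ν), integral_smul_const]
    congr 1
    -- ∫ u in S ν, φ u = α ν
    have hemb : MeasurableEmbedding (fun u : EuclideanSpace ℝ (Fin n) => x - u) :=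
      (MeasurableEquiv.subLeft x).measurableEmbedding
    have hmp : MeasurePreserving (fun u : EuclideanSpace ℝ (Fin n) => x - u) volume volume :=
      Measure.measurePreserving_sub_left volume x
    have h1 : ∫ u in S ν, φ u = ∫ y in interior (T ν), φ (x - y) := by
      have := hmp.setIntegral_preimage_emb hemb
        (fun y : EuclideanSpace ℝ (Fin n) => φ (x - y)) (interior (T ν))
      simp only [sub_sub_cancel] at this
      rw [hSdef]
      exact this
    have h2 : ∫ y in interior (T ν), φ (x - y) = ∫ y in T ν, φ (x - y) :=
      setIntegral_congr_set (interior_ae_eq_of_null_frontier (hfront ν))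
    have h3 : ∫ y in T ν, φ (x - y) = α ν := by
      rw [hα ν]
      have hdisj : Disjoint (T ν ∩ Metric.ball x ε) (T ν \ Metric.ball x ε) :=
        Set.disjoint_left.mpr fun a ha hb => hb.2 ha.2
      have hTsplit : T ν = (T ν ∩ Metric.ball x ε) ∪ (T ν \ Metric.ball x ε) :=
        (Set.inter_union_diff (T ν) (Metric.ball x ε)).symm
      conv_lhs => rw [hTsplit]
      rw [setIntegral_union hdisj ((hTmeas ν).diff measurableSet_ball)
        hmoll_int.integrableOn hmoll_int.integrableOn]
      have hz : ∫ y in T ν \ Metric.ball x ε, φ (x - y) = 0 :=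
        setIntegral_eq_zero_of_forall_eq_zero fun y hy => hmoll_zero y hy.2
      rw [hz, add_zero]
    rw [h1, h2, h3]
  -- conclude
  have hFd' : HasFDerivAt (fun z => ∫ y in D, g y * φ (z - y))
      (∑ ν, α ν • (innerSL ℝ (w ν) : EuclideanSpace ℝ (Fin n) →L[ℝ] ℝ)) x := by
    rw [hFeq]
    have : MeasureTheory.convolution f (fderiv ℝ φ)
        (L.precompR (EuclideanSpace ℝ (Fin n))) volume x
        = ∑ ν, α ν • (innerSL ℝ (w ν) : EuclideanSpace ℝ (Fin n) →L[ℝ] ℝ) := by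
      rw [hsamederiv, huniq, hintF']
    rw [← this]
    exact hFd
  have hgrad : HasGradientAt (fun z => ∫ y in D, g y * φ (z - y)) (∑ ν, α ν • w ν) x := by
    rw [hasGradientAt_iff_hasFDerivAt]
    have htd : (InnerProductSpace.toDual ℝ (EuclideanSpace ℝ (Fin n))) (∑ ν, α ν • w ν)
        = ∑ ν, α ν • (innerSL ℝ (w ν) : EuclideanSpace ℝ (Fin n) →L[ℝ] ℝ) := by
      apply ContinuousLinearMap.ext
      intro v
      simp only [InnerProductSpace.toDual_apply_apply, ContinuousLinearMap.coe_sum',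
        Finset.sum_apply, ContinuousLinearMap.coe_smul', Pi.smul_apply, innerSL_apply_apply,
        smul_eq_mul, sum_inner, real_inner_smul_left]
    rw [htd]
    exact hFd'
  exact hgrad.gradient
end

section
/- Let P : [0,ε) → 𝒮_n^+ type data be given as follows: suppose X : [0,ε) → ℝ^{n×n} is differentiable with X(0) = I and X'(0) = Df, P₀, P : [0,ε) → 𝒮_n differentiable with P(0) = P₀ ≻ 0, and λ : [0,ε) → ℝ, v : [0,ε) → ℝ^n differentiable with ‖v(t)‖ ≡ 1 satisfy X(t)^T P(t) X(t) v(t) = λ(t) P₀ v(t) for all t. Then λ(0) = 1 and (Df^T P₀ + P₀ Df + P'(0) − λ'(0) P₀) v(0) = 0. -/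
/-!
At `t = 0` the identity reads `P₀ v(0) = λ(0) P₀ v(0)` with `P₀ v(0) ≠ 0`, so `λ(0) = 1`.
The difference of the two sides of the identity vanishes on `[0, ε)`, and one-sided derivatives
on `[0, ε)` are unique, so its derivative at `0`, computed by the product rule for the bilinear
maps of matrix multiplication, is zero; with `X(0) = 1`, `P(0) = P₀`, `λ(0) = 1` the terms
`P₀ v'(0)` cancel and what remains is the claimed eigen-equation.
-/

open Matrix

attribute [local instance] Matrix.normedAddCommGroup Matrix.normedSpace

section Bilinear

variable {𝕜 E F G : Type*} [NontriviallyNormedField 𝕜] [CompleteSpace 𝕜]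
  [NormedAddCommGroup E] [NormedSpace 𝕜 E] [FiniteDimensional 𝕜 E]
  [NormedAddCommGroup F] [NormedSpace 𝕜 F] [FiniteDimensional 𝕜 F]
  [NormedAddCommGroup G] [NormedSpace 𝕜 G]

theorem LinearMap.hasDerivWithinAt_of_bilinear (B : E →ₗ[𝕜] F →ₗ[𝕜] G) {u : 𝕜 → E} {v : 𝕜 → F}
    {u' : E} {v' : F} {s : Set 𝕜} {x : 𝕜}
    (hu : HasDerivWithinAt u u' s x) (hv : HasDerivWithinAt v v' s x) :
    HasDerivWithinAt (fun t ↦ B (u t) (v t)) (B (u x) v' + B u' (v x)) s x :=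
  (LinearMap.toContinuousLinearMap
    (LinearMap.toContinuousLinearMap.toLinearMap ∘ₗ B)).hasDerivWithinAt_of_bilinear hu hv

end Bilinear

section MatrixCalculus

variable {𝕜 l m n : Type*} [NontriviallyNormedField 𝕜] [CompleteSpace 𝕜]
  [Fintype l] [Fintype m] [Fintype n] {s : Set 𝕜} {x : 𝕜}

theorem HasDerivWithinAt.matrix_mul {A : 𝕜 → Matrix l m 𝕜} {B : 𝕜 → Matrix m n 𝕜}
    {A' : Matrix l m 𝕜} {B' : Matrix m n 𝕜}
    (hA : HasDerivWithinAt A A' s x) (hB : HasDerivWithinAt B B' s x) :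
    HasDerivWithinAt (fun t ↦ A t * B t) (A x * B' + A' * B x) s x :=
  (mulLinearMap 𝕜).hasDerivWithinAt_of_bilinear hA hB

theorem HasDerivWithinAt.matrix_mulVec {A : 𝕜 → Matrix m n 𝕜} {w : 𝕜 → n → 𝕜}
    {A' : Matrix m n 𝕜} {w' : n → 𝕜}
    (hA : HasDerivWithinAt A A' s x) (hw : HasDerivWithinAt w w' s x) :
    HasDerivWithinAt (fun t ↦ A t *ᵥ w t) (A x *ᵥ w' + A' *ᵥ w x) s x :=
  (mulVecBilin 𝕜 𝕜).hasDerivWithinAt_of_bilinear hA hw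

theorem HasDerivWithinAt.matrix_transpose {A : 𝕜 → Matrix m n 𝕜} {A' : Matrix m n 𝕜}
    (hA : HasDerivWithinAt A A' s x) :
    HasDerivWithinAt (fun t ↦ (A t)ᵀ) A'ᵀ s x :=
  (LinearMap.toContinuousLinearMap (transposeLinearEquiv m n 𝕜 𝕜).toLinearMap).hasFDerivAt
    |>.comp_hasDerivWithinAt x hA

end MatrixCalculus

theorem HasDerivWithinAt.eq_zero_of_eqOn_zero {𝕜 F : Type*} [NontriviallyNormedField 𝕜]
    [NormedAddCommGroup F] [NormedSpace 𝕜 F] {f : 𝕜 → F} {f' : F} {s : Set 𝕜} {x : 𝕜}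
    (hf : HasDerivWithinAt f f' s x) (hzero : Set.EqOn f 0 s) (hx : x ∈ s)
    (hs : UniqueDiffWithinAt 𝕜 s x) : f' = 0 :=
  hs.eq_deriv s hf ((hasDerivWithinAt_const x s 0).congr hzero (hzero hx))

theorem derivative_of_generalized_singular_value_general {n : ℕ} (ε : ℝ) (hε : 0 < ε)
    (Df P₀ P' : Matrix (Fin n) (Fin n) ℝ)
    (X P : ℝ → Matrix (Fin n) (Fin n) ℝ)
    (lam : ℝ → ℝ) (lam' : ℝ) (v : ℝ → (Fin n → ℝ)) (v' : Fin n → ℝ)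
    (hX0 : X 0 = 1) (hX : HasDerivWithinAt X Df (Set.Ico 0 ε) 0)
    (hP0 : P 0 = P₀) (hP₀pos : P₀.PosDef)
    (hP : HasDerivWithinAt P P' (Set.Ico 0 ε) 0)
    (hlam : HasDerivWithinAt lam lam' (Set.Ico 0 ε) 0)
    (hv : HasDerivWithinAt v v' (Set.Ico 0 ε) 0)
    (hnorm : ∀ t ∈ Set.Ico 0 ε, ∑ i, v t i ^ 2 = 1)
    (heq : ∀ t ∈ Set.Ico 0 ε,
      ((X t)ᵀ * P t * X t).mulVec (v t) = lam t • P₀.mulVec (v t)) :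
    lam 0 = 1 ∧ (Dfᵀ * P₀ + P₀ * Df + P' - lam' • P₀).mulVec (v 0) = 0 := by
  have h0 : (0 : ℝ) ∈ Set.Ico 0 ε := ⟨le_rfl, hε⟩
  have hv0 : v 0 ≠ 0 := fun h ↦ by simpa [h] using hnorm 0 h0
  have hPv0 : P₀ *ᵥ v 0 ≠ 0 := fun h ↦
    hv0 (mulVec_injective_iff_isUnit.mpr hP₀pos.isUnit (h.trans (mulVec_zero P₀).symm))
  have hlam0 : lam 0 = 1 := by
    have h := heq 0 h0
    rw [hX0, hP0, transpose_one, one_mul, mul_one] at h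
    exact smul_left_injective ℝ hPv0 (by simpa using h.symm)
  refine ⟨hlam0, ?_⟩
  have hderiv := (((hX.matrix_transpose.matrix_mul hP).matrix_mul hX).matrix_mulVec hv).sub
    (hlam.smul ((hasDerivWithinAt_const 0 _ P₀).matrix_mulVec hv))
  have hzero := hderiv.eq_zero_of_eqOn_zero (fun t ht ↦ sub_eq_zero.mpr (heq t ht)) h0
    (uniqueDiffOn_Ico 0 ε 0 h0)
  rw [hX0, hP0, hlam0] at hzero
  simp only [transpose_one, one_mul, mul_one, one_smul, zero_mulVec, add_zero, add_mulVec,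
    sub_mulVec, smul_mulVec] at hzero ⊢
  rw [← hzero]
  abel

/-- if `X(t)ᵀ P(t) X(t) v(t) = λ(t) P₀ v(t)` on `[0,ε)` with `X(0) = I`,
`X'(0) = Df`, `P(0) = P₀ ≻ 0`, `‖v(t)‖ ≡ 1`, then `λ(0) = 1` and
`(Dfᵀ P₀ + P₀ Df + P'(0) − λ'(0) P₀) v(0) = 0`. -/
theorem derivative_of_generalized_singular_value {n : ℕ} (ε : ℝ) (hε : 0 < ε)
    (Df P₀ P' : Matrix (Fin n) (Fin n) ℝ)
    (X P : ℝ → Matrix (Fin n) (Fin n) ℝ)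
    (lam : ℝ → ℝ) (lam' : ℝ) (v : ℝ → (Fin n → ℝ)) (v' : Fin n → ℝ)
    (hX0 : X 0 = 1) (hX : HasDerivWithinAt X Df (Set.Ico 0 ε) 0)
    (hP0 : P 0 = P₀) (hP₀pos : P₀.PosDef)
    (hPsymm : ∀ t ∈ Set.Ico 0 ε, (P t).IsSymm)
    (hP : HasDerivWithinAt P P' (Set.Ico 0 ε) 0)
    (hlam : HasDerivWithinAt lam lam' (Set.Ico 0 ε) 0)
    (hv : HasDerivWithinAt v v' (Set.Ico 0 ε) 0)
    (hnorm : ∀ t ∈ Set.Ico 0 ε, ∑ i, v t i ^ 2 = 1)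
    (heq : ∀ t ∈ Set.Ico 0 ε,
      ((X t)ᵀ * P t * X t).mulVec (v t) = lam t • P₀.mulVec (v t)) :
    lam 0 = 1 ∧ (Dfᵀ * P₀ + P₀ * Df + P' - lam' • P₀).mulVec (v 0) = 0 :=
  derivative_of_generalized_singular_value_general ε hε Df P₀ P' X P lam lam' v v' hX0 hX hP0 hP₀pos
    hP hlam hv hnorm heq
end
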